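/- If (T_1,...,T_5) is a 5-way 4-cycle trade of volume 3 and foundation 8, then the graph of the trade is isomorphic to the complete bipartite graph K_{2,6}. -/
import Mathlib

open Finset

/-- The edge set of the 4-cycle `(a, b, c, d)`. -/
def cyc {V : Type} [DecidableEq V] (a b c d : V) : Finset (Sym2 V) :=
  {s(a, b), s(b, c), s(c, d), s(d, a)}

/-- A finite set of edges forms a 4-cycle. -/
def IsCycle4 {V : Type} [DecidableEq V] (E : Finset (Sym2 V)) : Prop :=
  ∃ a b c d : V, a ≠ b ∧ a ≠ c ∧ a ≠ d ∧ b ≠ c ∧ b ≠ d ∧ c ≠ d ∧ E = cyc a b c d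

/-- Total edge set of a family of cycles. -/
def edgesOf {V : Type} [DecidableEq V] (T : Finset (Finset (Sym2 V))) : Finset (Sym2 V) :=
  T.biUnion id

/-- A family of pairwise edge-disjoint 4-cycles. -/
def EdgeDisjointFamily {V : Type} [DecidableEq V] (T : Finset (Finset (Sym2 V))) : Prop :=
  (∀ E ∈ T, IsCycle4 E) ∧ (T : Set (Finset (Sym2 V))).Pairwise Disjoint

/-- A 4-cycle bitrade. -/
def IsBitrade {V : Type} [DecidableEq V] (T1 T2 : Finset (Finset (Sym2 V))) : Prop :=
  EdgeDisjointFamily T1 ∧ EdgeDisjointFamily T2 ∧ Disjoint T1 T2 ∧ edgesOf T1 = edgesOf T2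

/-- The foundation: the number of vertices covered by the cycles of the family. -/
noncomputable def foundation {V : Type} [DecidableEq V] (T : Finset (Finset (Sym2 V))) : ℕ :=
  {v : V | ∃ E ∈ T, ∃ e ∈ E, v ∈ e}.ncard

section Aux

variable {V : Type} [DecidableEq V]

/-- The support of an edge, as a finset. -/
def esupp : Sym2 V → Finset V :=
  Sym2.lift ⟨fun a b => {a, b}, fun a b => by simp [Finset.pair_comm]⟩

@[simp] lemma mem_esupp {v : V} {e : Sym2 V} : v ∈ esupp e ↔ v ∈ e := by
  induction e using Sym2.ind with
  | _ a b => simp [esupp, Sym2.mem_iff]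

lemma cyc_card {a b c d : V} (hab : a ≠ b) (hac : a ≠ c) (had : a ≠ d)
    (hbc : b ≠ c) (hbd : b ≠ d) (hcd : c ≠ d) : (cyc a b c d).card = 4 := by
  rw [cyc, card_insert_of_notMem, card_insert_of_notMem, card_insert_of_notMem,
    card_singleton] <;> simp [Sym2.eq_iff] <;> tauto

lemma quad_card {v x y w : V} (hvx : v ≠ x) (hvy : v ≠ y) (hvw : v ≠ w)
    (hxy : x ≠ y) (hxw : x ≠ w) (hyw : y ≠ w) :
    ({s(v,x), s(v,y), s(x,w), s(y,w)} : Finset (Sym2 V)).card = 4 := by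
  rw [card_insert_of_notMem, card_insert_of_notMem, card_insert_of_notMem,
    card_singleton] <;> simp [Sym2.eq_iff] <;> tauto

lemma cyc_filter_card {a b c d v : V} (hab : a ≠ b) (hac : a ≠ c) (had : a ≠ d)
    (hbc : b ≠ c) (hbd : b ≠ d) (hcd : c ≠ d) :
    ((cyc a b c d).filter (fun e => v ∈ e)).card
      = if v = a ∨ v = b ∨ v = c ∨ v = d then 2 else 0 := by
  rw [cyc]
  by_cases h1 : v = a <;> by_cases h2 : v = b <;> by_cases h3 : v = c <;> by_cases h4 : v = d <;>
    simp_all [filter_insert, filter_singleton, Sym2.mem_iff, Sym2.eq_iff,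
      card_insert_of_notMem] <;>
    first
      | tauto
      | (rw [card_insert_of_notMem] <;> simp [Sym2.eq_iff] <;> tauto)

lemma cyc_find_w {a b c d v x y : V} (hab : a ≠ b) (hac : a ≠ c) (had : a ≠ d)
    (hbc : b ≠ c) (hbd : b ≠ d) (hcd : c ≠ d)
    (hvx : v ≠ x) (hvy : v ≠ y) (hxy : x ≠ y)
    (h1 : s(v,x) ∈ cyc a b c d) (h2 : s(v,y) ∈ cyc a b c d) :
    ∃ w, w ≠ v ∧ w ≠ x ∧ w ≠ y ∧ s(x,w) ∈ cyc a b c d ∧ s(y,w) ∈ cyc a b c d := by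
  simp only [cyc, mem_insert, mem_singleton, Sym2.eq_iff] at h1 h2
  rcases h1 with ((⟨rfl,rfl⟩|⟨rfl,rfl⟩)|(⟨rfl,rfl⟩|⟨rfl,rfl⟩)|(⟨rfl,rfl⟩|⟨rfl,rfl⟩)|(⟨rfl,rfl⟩|⟨rfl,rfl⟩)) <;>
  rcases h2 with ((⟨h2a,rfl⟩|⟨h2a,rfl⟩)|(⟨h2a,rfl⟩|⟨h2a,rfl⟩)|(⟨h2a,rfl⟩|⟨h2a,rfl⟩)|(⟨h2a,rfl⟩|⟨h2a,rfl⟩)) <;>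
  first
    | (exact absurd rfl hvx)
    | (exact absurd rfl hvy)
    | (exact absurd rfl hxy)
    | (exact absurd rfl hab) | (exact absurd rfl hac) | (exact absurd rfl had)
    | (exact absurd rfl hbc) | (exact absurd rfl hbd) | (exact absurd rfl hcd)
    | (exact absurd rfl hab.symm) | (exact absurd rfl hac.symm) | (exact absurd rfl had.symm)
    | (exact absurd rfl hbc.symm) | (exact absurd rfl hbd.symm) | (exact absurd rfl hcd.symm)
    | (exact absurd h2a hvx) | (exact absurd h2a hvx.symm)
    | (exact absurd h2a hvy) | (exact absurd h2a hvy.symm)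
    | (exact absurd h2a hxy) | (exact absurd h2a hxy.symm)
    | (exact absurd h2a hab) | (exact absurd h2a hab.symm)
    | (exact absurd h2a hac) | (exact absurd h2a hac.symm)
    | (exact absurd h2a had) | (exact absurd h2a had.symm)
    | (exact absurd h2a hbc) | (exact absurd h2a hbc.symm)
    | (exact absurd h2a hbd) | (exact absurd h2a hbd.symm)
    | (exact absurd h2a hcd) | (exact absurd h2a hcd.symm)
    | (refine ⟨a, ?_, ?_, ?_, ?_, ?_⟩ <;> (first | tauto | simp [cyc, Sym2.eq_iff] | (subst h2a; simp [cyc, Sym2.eq_iff]) | (subst h2a; tauto)))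
    | (refine ⟨b, ?_, ?_, ?_, ?_, ?_⟩ <;> (first | tauto | simp [cyc, Sym2.eq_iff] | (subst h2a; simp [cyc, Sym2.eq_iff]) | (subst h2a; tauto)))
    | (refine ⟨c, ?_, ?_, ?_, ?_, ?_⟩ <;> (first | tauto | simp [cyc, Sym2.eq_iff] | (subst h2a; simp [cyc, Sym2.eq_iff]) | (subst h2a; tauto)))
    | (refine ⟨d, ?_, ?_, ?_, ?_, ?_⟩ <;> (first | tauto | simp [cyc, Sym2.eq_iff] | (subst h2a; simp [cyc, Sym2.eq_iff]) | (subst h2a; tauto)))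

lemma mem_cyc_vertex {a b c d v : V} {e : Sym2 V} (he : e ∈ cyc a b c d) (hv : v ∈ e) :
    v = a ∨ v = b ∨ v = c ∨ v = d := by
  simp only [cyc, mem_insert, mem_singleton] at he
  rcases he with rfl | rfl | rfl | rfl <;> simp [Sym2.mem_iff] at hv <;> tauto

lemma cyc_edge_form {a b c d : V} {e : Sym2 V} (hab : a ≠ b) (hbc : b ≠ c) (hcd : c ≠ d)
    (had : a ≠ d) (he : e ∈ cyc a b c d) : ∃ p q, p ≠ q ∧ e = s(p,q) := by
  simp only [cyc, mem_insert, mem_singleton] at he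
  rcases he with rfl | rfl | rfl | rfl
  exacts [⟨a, b, hab, rfl⟩, ⟨b, c, hbc, rfl⟩, ⟨c, d, hcd, rfl⟩, ⟨d, a, fun h => had h.symm, rfl⟩]

lemma edge_through {p q v : V} (hpq : p ≠ q) (hv : v ∈ s(p,q)) :
    ∃ x, x ≠ v ∧ s(p,q) = s(v,x) := by
  rcases Sym2.mem_iff.mp hv with rfl | rfl
  · exact ⟨q, hpq.symm, rfl⟩
  · exact ⟨p, hpq, Sym2.eq_swap⟩

lemma even_sum_of_even {s : Finset (Finset (Sym2 V))} {f : Finset (Sym2 V) → ℕ}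
    (h : ∀ c ∈ s, Even (f c)) : Even (∑ c ∈ s, f c) :=
  Finset.sum_induction f Even (fun _ _ => Even.add) Even.zero h

end Aux

theorem five_way_trade_graph_is_K26 {V : Type} [DecidableEq V]
    (T : Fin 5 → Finset (Finset (Sym2 V)))
    (hfam : ∀ i, EdgeDisjointFamily (T i))
    (hcard : ∀ i, (T i).card = 3)
    (hdisj : ∀ i j, i ≠ j → Disjoint (T i) (T j))
    (hedges : ∀ i j, edgesOf (T i) = edgesOf (T j))
    (hfound : foundation (T 0) = 8) :
    ∃ A B : Finset V, A.card = 2 ∧ B.card = 6 ∧ Disjoint A B ∧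
      edgesOf (T 0) = A.biUnion (fun a => B.image (fun b => s(a, b))) := by
  classical
  set E : Finset (Sym2 V) := edgesOf (T 0) with hE
  -- each cycle has 4 edges
  have hc4 : ∀ i, ∀ C ∈ T i, C.card = 4 := by
    intro i C hC
    obtain ⟨a, b, c, d, h1, h2, h3, h4, h5, h6, rfl⟩ := (hfam i).1 C hC
    exact cyc_card h1 h2 h3 h4 h5 h6
  have hEcard : E.card = 12 := by
    have h1 : E.card = ∑ C ∈ T 0, (id C).card := by
      rw [hE, edgesOf]
      exact card_biUnion (fun x hx y hy hxy => (hfam 0).2 hx hy hxy)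
    simp only [id_eq] at h1
    rw [h1, Finset.sum_congr rfl (fun C hC => hc4 0 C hC), Finset.sum_const, hcard 0,
      smul_eq_mul]
  -- the foundation as a finset
  set F : Finset V := E.biUnion esupp with hF
  have hmemF : ∀ v ∈ F, ∃ e ∈ E, v ∈ e := by
    intro v hv
    obtain ⟨e, he, hve⟩ := mem_biUnion.mp hv
    exact ⟨e, he, mem_esupp.mp hve⟩
  have hmemF' : ∀ (v : V) (e : Sym2 V), e ∈ E → v ∈ e → v ∈ F := by
    intro v e he hv
    exact mem_biUnion.mpr ⟨e, he, mem_esupp.mpr hv⟩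
  have hFcard : F.card = 8 := by
    have hset : {v : V | ∃ E' ∈ T 0, ∃ e ∈ E', v ∈ e} = (F : Set V) := by
      ext v
      simp only [Set.mem_setOf_eq, coe_biUnion, Set.mem_iUnion, Finset.mem_coe, hF,
        mem_coe, mem_biUnion, mem_esupp]
      constructor
      · rintro ⟨C, hC, e, heC, hv⟩
        exact ⟨e, mem_biUnion.mpr ⟨C, hC, heC⟩, hv⟩
      · rintro ⟨e, he, hv⟩
        obtain ⟨C, hC, heC⟩ := mem_biUnion.mp he
        exact ⟨C, hC, e, heC, hv⟩
    rw [foundation, hset, Set.ncard_coe_finset] at hfound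
    exact hfound
  -- every edge has two distinct endpoints
  have hEform : ∀ e ∈ E, ∃ p q, p ≠ q ∧ e = s(p,q) := by
    intro e he
    obtain ⟨C, hC, heC⟩ := mem_biUnion.mp (hE ▸ he)
    obtain ⟨a, b, c, d, h1, h2, h3, h4, h5, h6, rfl⟩ := (hfam 0).1 C hC
    exact cyc_edge_form h1 h4 h6 h3 heC
  -- double counting: sum of degrees is 24
  have hsum : ∑ v ∈ F, (E.filter (fun e => v ∈ e)).card = 24 := by
    have step1 : ∑ v ∈ F, (E.filter (fun e => v ∈ e)).card
        = ∑ e ∈ E, (F.filter (fun v => v ∈ e)).card := by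
      simp only [card_filter]
      exact Finset.sum_comm
    have step2 : ∀ e ∈ E, (F.filter (fun v => v ∈ e)).card = 2 := by
      intro e he
      obtain ⟨p, q, hpq, rfl⟩ := hEform e he
      have hpF : p ∈ F := hmemF' p _ he (by simp [Sym2.mem_iff])
      have hqF : q ∈ F := hmemF' q _ he (by simp [Sym2.mem_iff])
      have : F.filter (fun v => v ∈ s(p,q)) = {p, q} := by
        ext u
        simp only [mem_filter, Sym2.mem_iff, mem_insert, mem_singleton]
        constructor
        · tauto
        · rintro (rfl | rfl) <;> simp_all
      rw [this, card_pair hpq]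
    rw [step1, Finset.sum_congr rfl step2, Finset.sum_const, hEcard, smul_eq_mul]
  -- some vertex has degree at most 3
  have hlow : ∃ v ∈ F, (E.filter (fun e => v ∈ e)).card ≤ 3 := by
    by_contra h
    push_neg at h
    have h4 : ∀ v ∈ F, 4 ≤ (E.filter (fun e => v ∈ e)).card := fun v hv => h v hv
    have := Finset.card_nsmul_le_sum F (fun v => (E.filter (fun e => v ∈ e)).card) 4 h4
    rw [hsum, hFcard, smul_eq_mul] at this
    omega
  -- degrees are even
  have heven : ∀ v : V, Even ((E.filter (fun e => v ∈ e)).card) := by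
    intro v
    rw [hE, edgesOf, filter_biUnion]
    simp only [id_eq]
    rw [card_biUnion (fun x hx y hy hxy =>
        Finset.disjoint_filter_filter ((hfam 0).2 hx hy hxy))]
    apply even_sum_of_even
    intro C hC
    obtain ⟨a, b, c, d, h1, h2, h3, h4, h5, h6, rfl⟩ := (hfam 0).1 C hC
    rw [cyc_filter_card h1 h2 h3 h4 h5 h6]
    split <;> decide
  -- get a degree-2 vertex
  obtain ⟨v, hvF, hv3⟩ := hlow
  have hv1 : 1 ≤ (E.filter (fun e => v ∈ e)).card := by
    obtain ⟨e, he, hve⟩ := hmemF v hvF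
    exact card_pos.mpr ⟨e, mem_filter.mpr ⟨he, hve⟩⟩
  have hv2 : (E.filter (fun e => v ∈ e)).card = 2 := by
    obtain ⟨k, hk⟩ := heven v
    omega
  obtain ⟨e1, e2, hne, hpair⟩ := card_eq_two.mp hv2
  have he1f : e1 ∈ E.filter (fun e => v ∈ e) := by rw [hpair]; simp
  have he2f : e2 ∈ E.filter (fun e => v ∈ e) := by rw [hpair]; simp
  have he1E : e1 ∈ E := (mem_filter.mp he1f).1
  have he2E : e2 ∈ E := (mem_filter.mp he2f).1
  obtain ⟨p1, q1, hpq1, heq1⟩ := hEform e1 he1E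
  obtain ⟨p2, q2, hpq2, heq2⟩ := hEform e2 he2E
  obtain ⟨x, hxv, hex⟩ := edge_through hpq1 (heq1 ▸ (mem_filter.mp he1f).2)
  obtain ⟨y, hyv, hey⟩ := edge_through hpq2 (heq2 ▸ (mem_filter.mp he2f).2)
  have he1 : e1 = s(v, x) := heq1.trans hex
  have he2 : e2 = s(v, y) := heq2.trans hey
  subst he1; subst he2
  have hxy : x ≠ y := by
    intro h
    subst h
    exact hne rfl
  have hvx : v ≠ x := fun h => hxv h.symm
  have hvy : v ≠ y := fun h => hyv h.symm
  -- for each of the five trades, find the fourth vertex of the cycle through v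
  have H : ∀ i : Fin 5, ∃ C ∈ T i, s(v,x) ∈ C ∧ s(v,y) ∈ C ∧
      ∃ w, w ≠ v ∧ w ≠ x ∧ w ≠ y ∧ s(x,w) ∈ C ∧ s(y,w) ∈ C := by
    intro i
    have hx1 : s(v,x) ∈ edgesOf (T i) := by rw [hedges i 0]; exact he1E
    obtain ⟨C, hC, hmem⟩ := mem_biUnion.mp hx1
    rw [id_eq] at hmem
    obtain ⟨a, b, c, d, h1, h2, h3, h4, h5, h6, rfl⟩ := (hfam i).1 C hC
    have hvert : v = a ∨ v = b ∨ v = c ∨ v = d :=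
      mem_cyc_vertex hmem (by simp [Sym2.mem_iff])
    have hfc : ((cyc a b c d).filter (fun e => v ∈ e)).card = 2 := by
      rw [cyc_filter_card h1 h2 h3 h4 h5 h6, if_pos hvert]
    have hCE : cyc a b c d ⊆ E := by
      intro e he
      rw [hE, ← hedges i 0, edgesOf]
      exact mem_biUnion.mpr ⟨_, hC, he⟩
    have hsubf : (cyc a b c d).filter (fun e => v ∈ e) ⊆ {s(v,x), s(v,y)} := by
      rw [← hpair]
      exact filter_subset_filter _ hCE
    have hfeq : (cyc a b c d).filter (fun e => v ∈ e) = {s(v,x), s(v,y)} := by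
      apply Finset.eq_of_subset_of_card_le hsubf
      rw [hfc, ← hpair, hv2]
    have hmem2 : s(v,y) ∈ cyc a b c d := by
      have : s(v,y) ∈ (cyc a b c d).filter (fun e => v ∈ e) := by
        rw [hfeq]; simp
      exact (mem_filter.mp this).1
    obtain ⟨w, hw1, hw2, hw3, hw4, hw5⟩ :=
      cyc_find_w h1 h2 h3 h4 h5 h6 hvx hvy hxy hmem hmem2
    exact ⟨cyc a b c d, hC, hmem, hmem2, w, hw1, hw2, hw3, hw4, hw5⟩
  choose C hCT hCx hCy w hwv hwx hwy hwxC hwyC using H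
  have hCsubE : ∀ i, C i ⊆ E := by
    intro i e he
    rw [hE, ← hedges i 0, edgesOf]
    exact mem_biUnion.mpr ⟨_, hCT i, he⟩
  have hCeq : ∀ i, C i = {s(v,x), s(v,y), s(x, w i), s(y, w i)} := by
    intro i
    have hqc : ({s(v,x), s(v,y), s(x, w i), s(y, w i)} : Finset (Sym2 V)).card = 4 :=
      quad_card hvx hvy (fun h => hwv i h.symm) hxy
        (fun h => hwx i h.symm) (fun h => hwy i h.symm)
    have hsub : ({s(v,x), s(v,y), s(x, w i), s(y, w i)} : Finset (Sym2 V)) ⊆ C i := by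
      intro e he
      simp only [mem_insert, mem_singleton] at he
      rcases he with rfl | rfl | rfl | rfl
      exacts [hCx i, hCy i, hwxC i, hwyC i]
    have hc4i : (C i).card = 4 := hc4 i (C i) (hCT i)
    exact (Finset.eq_of_subset_of_card_le hsub (by rw [hc4i, hqc])).symm
  have hwinj : ∀ i j : Fin 5, i ≠ j → w i ≠ w j := by
    intro i j hij hww
    have hCC : C i = C j := by rw [hCeq i, hCeq j, hww]
    exact (Finset.disjoint_left.mp (hdisj i j hij) (hCT i)) (hCC ▸ hCT j)
  -- assemble the bipartition
  refine ⟨{x, y}, {v, w 0, w 1, w 2, w 3, w 4}, ?_, ?_, ?_, ?_⟩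
  · rw [card_insert_of_notMem (by simp [hxy]), card_singleton]
  · rw [card_insert_of_notMem, card_insert_of_notMem, card_insert_of_notMem,
      card_insert_of_notMem, card_insert_of_notMem, card_singleton]
    · simp only [mem_singleton]
      exact hwinj 3 4 (by decide)
    · simp only [mem_insert, mem_singleton]
      push_neg
      exact ⟨hwinj 2 3 (by decide), hwinj 2 4 (by decide)⟩
    · simp only [mem_insert, mem_singleton]
      push_neg
      exact ⟨hwinj 1 2 (by decide), hwinj 1 3 (by decide), hwinj 1 4 (by decide)⟩
    · simp only [mem_insert, mem_singleton]
      push_neg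
      exact ⟨hwinj 0 1 (by decide), hwinj 0 2 (by decide), hwinj 0 3 (by decide),
        hwinj 0 4 (by decide)⟩
    · simp only [mem_insert, mem_singleton]
      push_neg
      exact ⟨fun h => hwv 0 h.symm, fun h => hwv 1 h.symm, fun h => hwv 2 h.symm,
        fun h => hwv 3 h.symm, fun h => hwv 4 h.symm⟩
  · rw [Finset.disjoint_left]
    intro u hu
    simp only [mem_insert, mem_singleton] at hu ⊢
    push_neg
    rcases hu with rfl | rfl
    · exact ⟨fun h => hvx h.symm, fun h => hwx 0 h.symm, fun h => hwx 1 h.symm,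
        fun h => hwx 2 h.symm, fun h => hwx 3 h.symm, fun h => hwx 4 h.symm⟩
    · exact ⟨fun h => hvy h.symm, fun h => hwy 0 h.symm, fun h => hwy 1 h.symm,
        fun h => hwy 2 h.symm, fun h => hwy 3 h.symm, fun h => hwy 4 h.symm⟩
  · -- edge set equality
    have hBE : ∀ u ∈ ({v, w 0, w 1, w 2, w 3, w 4} : Finset V),
        s(x,u) ∈ E ∧ s(y,u) ∈ E := by
      intro u hu
      simp only [mem_insert, mem_singleton] at hu
      rcases hu with rfl | rfl | rfl | rfl | rfl | rfl
      · exact ⟨Sym2.eq_swap ▸ he1E, Sym2.eq_swap ▸ he2E⟩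
      · exact ⟨hCsubE 0 (hwxC 0), hCsubE 0 (hwyC 0)⟩
      · exact ⟨hCsubE 1 (hwxC 1), hCsubE 1 (hwyC 1)⟩
      · exact ⟨hCsubE 2 (hwxC 2), hCsubE 2 (hwyC 2)⟩
      · exact ⟨hCsubE 3 (hwxC 3), hCsubE 3 (hwyC 3)⟩
      · exact ⟨hCsubE 4 (hwxC 4), hCsubE 4 (hwyC 4)⟩
    set B : Finset V := {v, w 0, w 1, w 2, w 3, w 4} with hBdef
    have hxB : x ∉ B := by
      simp only [hBdef, mem_insert, mem_singleton]
      push_neg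
      exact ⟨hxv, fun h => hwx 0 h.symm, fun h => hwx 1 h.symm, fun h => hwx 2 h.symm,
        fun h => hwx 3 h.symm, fun h => hwx 4 h.symm⟩
    have hyB : y ∉ B := by
      simp only [hBdef, mem_insert, mem_singleton]
      push_neg
      exact ⟨hyv, fun h => hwy 0 h.symm, fun h => hwy 1 h.symm, fun h => hwy 2 h.symm,
        fun h => hwy 3 h.symm, fun h => hwy 4 h.symm⟩
    have hBcard : B.card = 6 := by
      rw [hBdef, card_insert_of_notMem, card_insert_of_notMem, card_insert_of_notMem,
        card_insert_of_notMem, card_insert_of_notMem, card_singleton]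
      · simp only [mem_singleton]; exact hwinj 3 4 (by decide)
      · simp only [mem_insert, mem_singleton]; push_neg
        exact ⟨hwinj 2 3 (by decide), hwinj 2 4 (by decide)⟩
      · simp only [mem_insert, mem_singleton]; push_neg
        exact ⟨hwinj 1 2 (by decide), hwinj 1 3 (by decide), hwinj 1 4 (by decide)⟩
      · simp only [mem_insert, mem_singleton]; push_neg
        exact ⟨hwinj 0 1 (by decide), hwinj 0 2 (by decide), hwinj 0 3 (by decide),
          hwinj 0 4 (by decide)⟩
      · simp only [mem_insert, mem_singleton]; push_neg
        exact ⟨fun h => hwv 0 h.symm, fun h => hwv 1 h.symm, fun h => hwv 2 h.symm,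
          fun h => hwv 3 h.symm, fun h => hwv 4 h.symm⟩
    have hRHS : ({x, y} : Finset V).biUnion (fun a => B.image (fun b => s(a, b)))
        = B.image (fun b => s(x, b)) ∪ B.image (fun b => s(y, b)) := by
      rw [biUnion_insert, singleton_biUnion]
    have hsubRHS : ({x, y} : Finset V).biUnion (fun a => B.image (fun b => s(a, b))) ⊆ E := by
      rw [hRHS]
      apply union_subset
      · intro e he
        obtain ⟨u, hu, rfl⟩ := mem_image.mp he
        exact (hBE u hu).1
      · intro e he
        obtain ⟨u, hu, rfl⟩ := mem_image.mp he
        exact (hBE u hu).2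
    have hinjx : Set.InjOn (fun b => s(x, b)) B := by
      intro u hu u' hu' huu
      simp only [Sym2.eq_iff] at huu
      rcases huu with ⟨-, h⟩ | ⟨h, h'⟩
      · exact h
      · exact absurd (h ▸ hu') hxB
    have hinjy : Set.InjOn (fun b => s(y, b)) B := by
      intro u hu u' hu' huu
      simp only [Sym2.eq_iff] at huu
      rcases huu with ⟨-, h⟩ | ⟨h, h'⟩
      · exact h
      · exact absurd (h ▸ hu') hyB
    have hdisjxy : Disjoint (B.image (fun b => s(x, b))) (B.image (fun b => s(y, b))) := by
      rw [Finset.disjoint_left]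
      intro e hex hey
      obtain ⟨u, hu, rfl⟩ := mem_image.mp hex
      obtain ⟨u', hu', heq⟩ := mem_image.mp hey
      simp only [Sym2.eq_iff] at heq
      rcases heq with ⟨h, -⟩ | ⟨h, h'⟩
      · exact hxy h.symm
      · exact hyB (h ▸ hu)
    have hcardRHS : (({x, y} : Finset V).biUnion (fun a => B.image (fun b => s(a, b)))).card
        = 12 := by
      rw [hRHS, card_union_of_disjoint hdisjxy, card_image_of_injOn hinjx,
        card_image_of_injOn hinjy, hBcard]
    exact (Finset.eq_of_subset_of_card_le hsubRHS
      (by rw [hEcard, hcardRHS])).symm
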